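/- For every θ ∈ Θ with |θ| < r₀ and every z ∈ Z, one has a_θ[ℳ_θ z] ≥ ν_⋆ |θ|² ‖z‖₀², where ν_⋆ = γ(1 − K_Z)/(3 K²). -/

import Mathlib

noncomputable section

open scoped Classical

/-- An abstract family of non-negative bounded sesquilinear forms `a θ`, `b θ`
(linear in the first argument, conjugate-linear in the second) on a complex Hilbert
space `H`, parametrised by `θ` in a compact subset `Θ` of `ℝⁿ`, such that
`(·,·)_θ := a θ + b θ` is a family of inner products whose norms are equivalent
to the norm of `H`. -/
structure FormFamily (n : ℕ) (H : Type*) [NormedAddCommGroup H] [InnerProductSpace ℂ H]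
    [CompleteSpace H] where
  Θ : Set (EuclideanSpace ℝ (Fin n))
  compactΘ : IsCompact Θ
  a : EuclideanSpace ℝ (Fin n) → H → H → ℂ
  b : EuclideanSpace ℝ (Fin n) → H → H → ℂ
  a_addL : ∀ θ ∈ Θ, ∀ u v w : H, a θ (u + v) w = a θ u w + a θ v w
  a_smulL : ∀ θ ∈ Θ, ∀ (c : ℂ) (u w : H), a θ (c • u) w = c * a θ u w
  a_addR : ∀ θ ∈ Θ, ∀ u v w : H, a θ u (v + w) = a θ u v + a θ u w
  a_smulR : ∀ θ ∈ Θ, ∀ (c : ℂ) (u w : H), a θ u (c • w) = starRingEnd ℂ c * a θ u w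
  a_nonneg : ∀ θ ∈ Θ, ∀ u : H, 0 ≤ (a θ u u).re
  a_im : ∀ θ ∈ Θ, ∀ u : H, (a θ u u).im = 0
  a_bdd : ∀ θ ∈ Θ, ∃ C : ℝ, ∀ u w : H, ‖a θ u w‖ ≤ C * ‖u‖ * ‖w‖
  b_addL : ∀ θ ∈ Θ, ∀ u v w : H, b θ (u + v) w = b θ u w + b θ v w
  b_smulL : ∀ θ ∈ Θ, ∀ (c : ℂ) (u w : H), b θ (c • u) w = c * b θ u w
  b_addR : ∀ θ ∈ Θ, ∀ u v w : H, b θ u (v + w) = b θ u v + b θ u w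
  b_smulR : ∀ θ ∈ Θ, ∀ (c : ℂ) (u w : H), b θ u (c • w) = starRingEnd ℂ c * b θ u w
  b_nonneg : ∀ θ ∈ Θ, ∀ u : H, 0 ≤ (b θ u u).re
  b_im : ∀ θ ∈ Θ, ∀ u : H, (b θ u u).im = 0
  b_bdd : ∀ θ ∈ Θ, ∃ C : ℝ, ∀ u w : H, ‖b θ u w‖ ≤ C * ‖u‖ * ‖w‖
  equivNorm : ∀ θ ∈ Θ, ∃ c₁ c₂ : ℝ, 0 < c₁ ∧ ∀ u : H,
    c₁ * ‖u‖ ^ 2 ≤ (a θ u u).re + (b θ u u).re ∧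
      (a θ u u).re + (b θ u u).re ≤ c₂ * ‖u‖ ^ 2

namespace FormFamily

variable {n : ℕ} {H : Type*} [NormedAddCommGroup H] [InnerProductSpace ℂ H] [CompleteSpace H]

/-- The inner product `(u, w)_θ := a θ u w + b θ u w`. -/
def ip (S : FormFamily n H) (θ : EuclideanSpace ℝ (Fin n)) (u w : H) : ℂ :=
  S.a θ u w + S.b θ u w

/-- The squared `θ`-norm `‖u‖_θ ^ 2 = (u, u)_θ`. -/
def nsq (S : FormFamily n H) (θ : EuclideanSpace ℝ (Fin n)) (u : H) : ℝ :=
  (S.ip θ u u).re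

/-- The `θ`-norm `‖u‖_θ`. -/
def nrm (S : FormFamily n H) (θ : EuclideanSpace ℝ (Fin n)) (u : H) : ℝ :=
  Real.sqrt (S.nsq θ u)

/-- The degeneracy subspace `V_θ = {v : a_θ[v] = 0}`. -/
def V (S : FormFamily n H) (θ : EuclideanSpace ℝ (Fin n)) : Set H :=
  {v : H | S.a θ v v = 0}

/-- `W_θ`, the orthogonal complement of `V_θ` in `H` with respect to `(·,·)_θ`. -/
def W (S : FormFamily n H) (θ : EuclideanSpace ℝ (Fin n)) : Set H :=
  {w : H | ∀ v ∈ S.V θ, S.ip θ w v = 0}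

end FormFamily

/-- `f : H → ℂ` is a bounded conjugate-linear functional. -/
def IsBddConjLinear {H : Type*} [NormedAddCommGroup H] [InnerProductSpace ℂ H]
    (f : H → ℂ) : Prop :=
  (∀ u v : H, f (u + v) = f u + f v) ∧
    (∀ (c : ℂ) (u : H), f (c • u) = starRingEnd ℂ c * f u) ∧
    ∃ C : ℝ, ∀ u : H, ‖f u‖ ≤ C * ‖u‖

/-- The homogenised form `a^h_θ(v,vt) = a''₀(v,vt)θ·θ - a₀(N_θ v, N_θ vt)`. -/
def ahom {n : ℕ} {H : Type*} [NormedAddCommGroup H] [InnerProductSpace ℂ H] [CompleteSpace H]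
    (S : FormFamily n H) (a'' : H → H → Fin n → Fin n → ℂ)
    (N : EuclideanSpace ℝ (Fin n) → H → H) (θ : EuclideanSpace ℝ (Fin n)) (v vt : H) : ℂ :=
  (∑ j, ∑ k, a'' v vt j k * (θ j : ℂ) * (θ k : ℂ)) - S.a 0 (N θ v) (N θ vt)


/-!
Write `u := z + 𝒩_θ z = v + w` with `v ∈ V_θ`, `w ∈ W_θ`. Then
`a_θ[u] = a_θ[w] ≥ γ |θ|² ‖w‖_θ² ≥ γ |θ|² K⁻² ‖w‖₀²`, so it suffices to show
`‖w‖₀² ≥ (1 - K_Z)/3 ‖z‖₀²`. By (H2) at `(θ, 0)`, `v` lies within `L⋆ |θ| ‖v‖_θ` of some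
`v⋆ ∈ V⋆`; for `|θ| < r₀` this makes `r := v - v⋆` at most `(1 - K_Z)/2 ‖v⋆‖₀`. On the other hand
`𝒩_θ z ∈ W₀` is `(·,·)₀`-orthogonal to `z - v⋆ ∈ V₀`, and transversality of `V⋆` and `Z` gives
`‖u - v⋆‖₀² ≥ ‖z - v⋆‖₀² ≥ (1 - K_Z) (‖z‖₀² + ‖v⋆‖₀²)`. As `u - v⋆ = w + r` and `r` is small
compared to `v⋆`, the bound on `‖w‖₀` follows.
-/

structure IsPosSesqForm {H : Type*} [AddCommGroup H] [Module ℂ H] (f : H → H → ℂ) : Prop where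
  add_left : ∀ u v w, f (u + v) w = f u w + f v w
  smul_left : ∀ (c : ℂ) u w, f (c • u) w = c * f u w
  add_right : ∀ u v w, f u (v + w) = f u v + f u w
  smul_right : ∀ (c : ℂ) u w, f u (c • w) = starRingEnd ℂ c * f u w
  im_self : ∀ u, (f u u).im = 0
  re_self_nonneg : ∀ u, 0 ≤ (f u u).re

namespace IsPosSesqForm

section Algebraic

variable {H : Type*} [AddCommGroup H] [Module ℂ H] {f : H → H → ℂ} (hf : IsPosSesqForm f)
include hf

-- Polarization: the diagonal is real at `u + w` and at `u + i w`.
theorem conj_apply (u w : H) : starRingEnd ℂ (f u w) = f w u := by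
  have hI : f (u + Complex.I • w) (u + Complex.I • w)
      = f u u - Complex.I * f u w + Complex.I * f w u + f w w := by
    simp only [hf.add_left, hf.add_right, hf.smul_left, hf.smul_right, Complex.conj_I]
    linear_combination (-(f w w)) * Complex.I_sq
  have h₁ := hf.im_self (u + w)
  have h₂ := hf.im_self (u + Complex.I • w)
  simp only [hf.add_left, hf.add_right] at h₁
  rw [hI] at h₂
  have hu := hf.im_self u
  have hw := hf.im_self w
  simp only [Complex.add_im, Complex.sub_im, Complex.mul_im, Complex.I_re, Complex.I_im] at h₁ h₂
  apply Complex.ext <;> simp only [Complex.conj_re, Complex.conj_im] <;> linarith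

-- The arguments are swapped: Mathlib's inner products are conjugate-linear in the first one.
abbrev toCore : PreInnerProductSpace.Core ℂ H where
  inner x y := f y x
  conj_inner_symm x y := hf.conj_apply x y
  re_inner_nonneg x := hf.re_self_nonneg x
  add_left x y z := hf.add_right z x y
  smul_left x y r := hf.smul_right r y x

theorem norm_apply_le (u w : H) : ‖f u w‖ ≤ √(f u u).re * √(f w w).re := by
  rw [mul_comm]
  exact InnerProductSpace.Core.norm_inner_le_norm (c := hf.toCore) w u

theorem sqrt_re_add_le (u w : H) : √(f (u + w) (u + w)).re ≤ √(f u u).re + √(f w w).re :=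
  @norm_add_le H
    (InnerProductSpace.Core.toSeminormedAddCommGroup (c := hf.toCore)).toSeminormedAddGroup u w

theorem re_apply_add_self (u w : H) :
    (f (u + w) (u + w)).re = (f u u).re + 2 * (f u w).re + (f w w).re := by
  have h : f (u + w) (u + w) = f u u + f w u + f u w + f w w :=
    InnerProductSpace.Core.inner_add_add_self (c := hf.toCore) u w
  rw [h, ← hf.conj_apply u w]
  simp only [Complex.add_re, Complex.conj_re]
  ring

theorem re_apply_sub_self (u w : H) :
    (f (u - w) (u - w)).re = (f u u).re - 2 * (f u w).re + (f w w).re := by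
  have h : f (u - w) (u - w) = f u u - f w u - f u w + f w w :=
    InnerProductSpace.Core.inner_sub_sub_self (c := hf.toCore) u w
  rw [h, ← hf.conj_apply u w]
  simp only [Complex.add_re, Complex.sub_re, Complex.conj_re]
  ring

theorem apply_eq_zero_of_apply_self {u : H} (hu : f u u = 0) (w : H) : f u w = 0 := by
  simpa [hu] using hf.norm_apply_le u w

theorem apply_eq_zero_of_apply_self' {u : H} (hu : f u u = 0) (w : H) : f w u = 0 := by
  rw [← hf.conj_apply, hf.apply_eq_zero_of_apply_self hu, map_zero]

theorem re_apply_add_self_of_apply_eq_zero {u w : H} (h : f u w = 0) :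
    (f (u + w) (u + w)).re = (f u u).re + (f w w).re := by
  rw [hf.re_apply_add_self, h, Complex.zero_re, mul_zero, add_zero]

theorem one_sub_mul_le_re_apply_sub_self {k : ℝ} (hk : 0 ≤ k) {u w : H}
    (h : ‖f w u‖ ≤ k * √(f w w).re * √(f u u).re) :
    (1 - k) * ((f u u).re + (f w w).re) ≤ (f (u - w) (u - w)).re := by
  have hre : (f u w).re ≤ k * √(f w w).re * √(f u u).re := by
    rw [← hf.conj_apply, Complex.conj_re]
    exact (Complex.re_le_norm _).trans h
  have hu := Real.sq_sqrt (hf.re_self_nonneg u)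
  have hw := Real.sq_sqrt (hf.re_self_nonneg w)
  rw [hf.re_apply_sub_self]
  nlinarith [mul_nonneg hk (sq_nonneg (√(f w w).re - √(f u u).re))]

def leftₗ (w : H) : H →ₗ[ℂ] ℂ where
  toFun u := f u w
  map_add' u v := hf.add_left u v w
  map_smul' c u := hf.smul_left c u w

-- By Cauchy–Schwarz this is `{v | f v v = 0}` (`mem_radical`); as an intersection of kernels it
-- is visibly a submodule, and closed when `f` is bounded.
def radical : Submodule ℂ H := ⨅ w, LinearMap.ker (hf.leftₗ w)

theorem mem_radical {v : H} : v ∈ hf.radical ↔ f v v = 0 := by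
  simp only [radical, Submodule.mem_iInf, LinearMap.mem_ker]
  exact ⟨fun h => h v, hf.apply_eq_zero_of_apply_self⟩

end Algebraic

variable {H : Type*} [NormedAddCommGroup H] [NormedSpace ℂ H] {f : H → H → ℂ}
  (hf : IsPosSesqForm f)
include hf

theorem isClosed_radical {C : ℝ} (hC : ∀ u w, ‖f u w‖ ≤ C * ‖u‖ * ‖w‖) :
    IsClosed (hf.radical : Set H) := by
  rw [radical, Submodule.coe_iInf]
  refine isClosed_iInter fun w => ?_
  have hcont : Continuous (hf.leftₗ w) :=
    AddMonoidHomClass.continuous_of_bound _ (C * ‖w‖) fun u => by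
      rw [mul_right_comm]; exact hC u w
  exact isClosed_singleton.preimage hcont

end IsPosSesqForm

-- A copy of `H` without its norm, to carry the inner product given by a coercive form.
def Renormed (H : Type*) : Type _ := H

instance {H : Type*} [AddCommGroup H] : AddCommGroup (Renormed H) :=
  inferInstanceAs (AddCommGroup H)

instance {H : Type*} [AddCommGroup H] [Module ℂ H] : Module ℂ (Renormed H) :=
  inferInstanceAs (Module ℂ H)

namespace IsPosSesqForm

variable {H : Type*} [NormedAddCommGroup H] [NormedSpace ℂ H] [CompleteSpace H]
  {f : H → H → ℂ} (hf : IsPosSesqForm f)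
include hf

-- `f` makes `Renormed H` a Hilbert space, complete because its norm is equivalent to that of `H`;
-- the projection theorem there gives `v`.
theorem exists_sub_orthogonal {c₁ c₂ : ℝ} (hc₁ : 0 < c₁)
    (hcoer : ∀ u, c₁ * ‖u‖ ^ 2 ≤ (f u u).re ∧ (f u u).re ≤ c₂ * ‖u‖ ^ 2)
    {V : Submodule ℂ H} (hV : IsClosed (V : Set H)) (u : H) :
    ∃ v ∈ V, ∀ v' ∈ V, f (u - v) v' = 0 := by
  have hdefinite (x : H) (hx : f x x = 0) : x = 0 := by
    have h := (hcoer x).1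
    rw [hx, Complex.zero_re] at h
    exact norm_eq_zero.1 (pow_eq_zero_iff two_ne_zero |>.1
      (le_antisymm (nonpos_of_mul_nonpos_right h hc₁) (sq_nonneg _)))
  let core : InnerProductSpace.Core ℂ (Renormed H) :=
    { IsPosSesqForm.toCore (H := Renormed H) hf with definite := hdefinite }
  let _ : NormedAddCommGroup (Renormed H) := core.toNormedAddCommGroup
  let _ : InnerProductSpace ℂ (Renormed H) := InnerProductSpace.ofCore core.toCore
  have hnorm (x : Renormed H) : ‖x‖ = √(f x x).re := rfl
  let e₀ : H ≃ₗ[ℂ] Renormed H := LinearEquiv.refl ℂ H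
  let e : H ≃L[ℂ] Renormed H :=
    e₀.toContinuousLinearEquivOfBounds √c₂ √(1 / c₁)
      (fun x => by
        rw [hnorm, ← Real.sqrt_sq (norm_nonneg x), ← Real.sqrt_mul' _ (sq_nonneg _)]
        exact Real.sqrt_le_sqrt (hcoer x).2)
      (fun x => by
        rw [hnorm, ← Real.sqrt_mul (by positivity)]
        refine Real.le_sqrt_of_sq_le ?_
        rw [div_mul_eq_mul_div, le_div_iff₀ hc₁, one_mul, mul_comm]
        exact (hcoer x).1)
  have : CompleteSpace (Renormed H) :=
    (completeSpace_congr (e := e.toEquiv) e.isUniformEmbedding).1 ‹_›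
  let V' : Submodule ℂ (Renormed H) := V.comap (e.symm : Renormed H →ₗ[ℂ] H)
  have : CompleteSpace V' := (hV.preimage e.symm.continuous).completeSpace_coe
  obtain ⟨y, hy, z, hz, hyz⟩ := V'.exists_add_mem_mem_orthogonal (e u)
  refine ⟨e.symm y, hy, fun v' hv' => ?_⟩
  have hzu : z = e u - y := by rw [hyz, add_sub_cancel_left]
  have hv'' : e v' ∈ V' := by simpa [V'] using hv'
  have : inner ℂ (e v') z = 0 := Submodule.inner_right_of_mem_orthogonal hv'' hz
  rwa [hzu] at this

end IsPosSesqForm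

theorem div_three_mul_sq_le_sq_of_le_add {s t x y r m d : ℝ} (hs0 : 0 ≤ s) (hs1 : s ≤ 1)
    (ht : t ≤ s / 3) (hy : 0 ≤ y) (hr0 : 0 ≤ r) (hm0 : 0 ≤ m)
    (hr : r ≤ t * (y + r)) (hm : s * (x ^ 2 + y ^ 2) ≤ m ^ 2) (hmd : m ≤ d + r) :
    s / 3 * x ^ 2 ≤ d ^ 2 := by
  have hr' : r ≤ s / 2 * y := by nlinarith [mul_le_mul_of_nonneg_right ht (add_nonneg hy hr0)]
  have hm' : m ^ 2 ≤ (d + s / 2 * y) ^ 2 := pow_le_pow_left₀ hm0 (by linarith) 2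
  -- `3 d² - s x² ≥ 2 d² - s d y + s y² (1 - s / 4) = 2 (d - s y / 4)² + s y² (1 - 3 s / 8)`
  nlinarith [sq_nonneg (d - s * y / 4), mul_nonneg (mul_nonneg hs0 (sq_nonneg y))
    (by linarith : 0 ≤ 1 - 3 * s / 8)]

theorem le_and_mul_le_of_lt_ite {x a b K L : ℝ} (hK : 0 < K) (hL : 0 ≤ L) (hb : 0 ≤ b)
    (hx : x < if L = 0 then a else min a (b / (3 * K * L))) : x ≤ a ∧ L * x * K ≤ b / 3 := by
  split_ifs at hx with hL0
  · exact ⟨hx.le, by rw [hL0]; linarith⟩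
  · have hLK : 0 < 3 * K * L := by positivity
    refine ⟨hx.le.trans (min_le_left _ _), ?_⟩
    have := (lt_div_iff₀ hLK).1 (hx.trans_le (min_le_right _ _))
    linarith

namespace FormFamily

variable {n : ℕ} {H : Type*} [NormedAddCommGroup H] [InnerProductSpace ℂ H] [CompleteSpace H]
  (S : FormFamily n H) {θ : EuclideanSpace ℝ (Fin n)}

theorem isPosSesqForm_a (hθ : θ ∈ S.Θ) : IsPosSesqForm (S.a θ) :=
  ⟨S.a_addL θ hθ, S.a_smulL θ hθ, S.a_addR θ hθ, S.a_smulR θ hθ, S.a_im θ hθ, S.a_nonneg θ hθ⟩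

theorem isPosSesqForm_ip (hθ : θ ∈ S.Θ) : IsPosSesqForm (S.ip θ) where
  add_left u v w := by simp only [ip, S.a_addL θ hθ, S.b_addL θ hθ]; ring
  smul_left c u w := by simp only [ip, S.a_smulL θ hθ, S.b_smulL θ hθ]; ring
  add_right u v w := by simp only [ip, S.a_addR θ hθ, S.b_addR θ hθ]; ring
  smul_right c u w := by simp only [ip, S.a_smulR θ hθ, S.b_smulR θ hθ]; ring
  im_self u := by simp only [ip, Complex.add_im, S.a_im θ hθ, S.b_im θ hθ, add_zero]
  re_self_nonneg u := by
    simp only [ip, Complex.add_re]; exact add_nonneg (S.a_nonneg θ hθ u) (S.b_nonneg θ hθ u)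

theorem coe_radical_a (hθ : θ ∈ S.Θ) : ((S.isPosSesqForm_a hθ).radical : Set H) = S.V θ :=
  Set.ext fun _ => (S.isPosSesqForm_a hθ).mem_radical

theorem sub_mem_V (hθ : θ ∈ S.Θ) {u v : H} (hu : u ∈ S.V θ) (hv : v ∈ S.V θ) :
    u - v ∈ S.V θ := by
  rw [← S.coe_radical_a hθ] at hu hv ⊢
  exact Submodule.sub_mem _ hu hv

theorem a_add_self_of_mem_V (hθ : θ ∈ S.Θ) {v : H} (hv : v ∈ S.V θ) (w : H) :
    S.a θ (v + w) (v + w) = S.a θ w w := by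
  have hf := S.isPosSesqForm_a hθ
  rw [hf.add_left, hf.add_right, hf.add_right, hf.apply_eq_zero_of_apply_self hv,
    hf.apply_eq_zero_of_apply_self hv, hf.apply_eq_zero_of_apply_self' hv]
  ring

theorem exists_sub_ip_orthogonal (hθ : θ ∈ S.Θ) {V : Submodule ℂ H} (hV : IsClosed (V : Set H))
    (u : H) : ∃ v ∈ V, ∀ v' ∈ V, S.ip θ (u - v) v' = 0 := by
  obtain ⟨c₁, c₂, hc₁, hc⟩ := S.equivNorm θ hθ
  simp only [← Complex.add_re] at hc
  exact (S.isPosSesqForm_ip hθ).exists_sub_orthogonal hc₁ hc hV u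

theorem exists_mem_V_sub_mem_W (hθ : θ ∈ S.Θ) (u : H) : ∃ v ∈ S.V θ, u - v ∈ S.W θ := by
  obtain ⟨C, hC⟩ := S.a_bdd θ hθ
  have hclosed := (S.isPosSesqForm_a hθ).isClosed_radical hC
  obtain ⟨v, hv, horth⟩ := S.exists_sub_ip_orthogonal hθ hclosed u
  rw [← S.coe_radical_a hθ]
  exact ⟨v, hv, fun v' hv' => horth v' (by rwa [← S.coe_radical_a hθ] at hv')⟩

theorem nsq_nonneg (hθ : θ ∈ S.Θ) (u : H) : 0 ≤ S.nsq θ u :=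
  (S.isPosSesqForm_ip hθ).re_self_nonneg u

theorem nrm_sq (hθ : θ ∈ S.Θ) (u : H) : S.nrm θ u ^ 2 = S.nsq θ u :=
  Real.sq_sqrt (S.nsq_nonneg hθ u)

theorem nrm_add_le (hθ : θ ∈ S.Θ) (u w : H) : S.nrm θ (u + w) ≤ S.nrm θ u + S.nrm θ w :=
  (S.isPosSesqForm_ip hθ).sqrt_re_add_le u w

theorem nsq_add_of_ip_eq_zero (hθ : θ ∈ S.Θ) {u w : H} (h : S.ip θ u w = 0) :
    S.nsq θ (u + w) = S.nsq θ u + S.nsq θ w :=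
  (S.isPosSesqForm_ip hθ).re_apply_add_self_of_apply_eq_zero h

theorem nsq_le_sq_mul_nsq {θ₁ θ₂ : EuclideanSpace ℝ (Fin n)} (hθ₁ : θ₁ ∈ S.Θ) (hθ₂ : θ₂ ∈ S.Θ)
    {K : ℝ} {u : H} (h : S.nrm θ₁ u ≤ K * S.nrm θ₂ u) : S.nsq θ₁ u ≤ K ^ 2 * S.nsq θ₂ u := by
  rw [← S.nrm_sq hθ₁, ← S.nrm_sq hθ₂, ← mul_pow]
  exact pow_le_pow_left₀ (Real.sqrt_nonneg _) h 2

theorem exists_nrm_sub_le_sInf (hθ : θ ∈ S.Θ) {V : Submodule ℂ H} (hV : IsClosed (V : Set H))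
    (u : H) : ∃ v ∈ V, S.nrm θ (u - v) ≤ sInf ((fun v' => S.nrm θ (u - v')) '' V) := by
  obtain ⟨v, hv, horth⟩ := S.exists_sub_ip_orthogonal hθ hV u
  refine ⟨v, hv, le_csInf ⟨_, 0, V.zero_mem, rfl⟩ ?_⟩
  rintro _ ⟨v', hv', rfl⟩
  refine Real.sqrt_le_sqrt ?_
  rw [show u - v' = (u - v) + (v - v') by abel,
    S.nsq_add_of_ip_eq_zero hθ (horth _ (V.sub_mem hv hv'))]
  exact le_add_of_nonneg_right (S.nsq_nonneg hθ _)

theorem one_sub_mul_le_nsq_add_sub (hθ : θ ∈ S.Θ) {KZ : ℝ} (hKZ : 0 ≤ KZ) {z v N : H}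
    (hzv : z - v ∈ S.V θ) (hN : N ∈ S.W θ)
    (htrans : ‖S.ip θ v z‖ ≤ KZ * S.nrm θ v * S.nrm θ z) :
    (1 - KZ) * (S.nsq θ z + S.nsq θ v) ≤ S.nsq θ (z + N - v) := by
  have hf := S.isPosSesqForm_ip hθ
  have hzv' : (1 - KZ) * (S.nsq θ z + S.nsq θ v) ≤ S.nsq θ (z - v) :=
    hf.one_sub_mul_le_re_apply_sub_self hKZ htrans
  rw [show z + N - v = N + (z - v) by abel, S.nsq_add_of_ip_eq_zero hθ (hN _ hzv)]
  linarith [S.nsq_nonneg hθ N]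

theorem div_three_mul_nsq_le_nsq_add_sub (hθ : θ ∈ S.Θ) {KZ t : ℝ} (hKZ0 : 0 ≤ KZ)
    (hKZ1 : KZ < 1) (ht : t ≤ (1 - KZ) / 3) (ht0 : 0 ≤ t) {z N v vs : H}
    (hzvs : z - vs ∈ S.V θ) (hN : N ∈ S.W θ)
    (htrans : ‖S.ip θ vs z‖ ≤ KZ * S.nrm θ vs * S.nrm θ z)
    (hv : S.nrm θ (v - vs) ≤ t * S.nrm θ v) :
    (1 - KZ) / 3 * S.nsq θ z ≤ S.nsq θ (z + N - v) := by
  have hM := S.one_sub_mul_le_nsq_add_sub hθ hKZ0 hzvs hN htrans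
  have hMD : S.nrm θ (z + N - vs) ≤ S.nrm θ (z + N - v) + S.nrm θ (v - vs) := by
    simpa using S.nrm_add_le hθ (z + N - v) (v - vs)
  have hvY : S.nrm θ v ≤ S.nrm θ vs + S.nrm θ (v - vs) := by
    simpa using S.nrm_add_le hθ vs (v - vs)
  rw [← S.nrm_sq hθ, ← S.nrm_sq hθ, ← S.nrm_sq hθ] at hM
  rw [← S.nrm_sq hθ, ← S.nrm_sq hθ]
  exact div_three_mul_sq_le_sq_of_le_add (by linarith) (by linarith) ht (Real.sqrt_nonneg _)
    (Real.sqrt_nonneg _) (Real.sqrt_nonneg _)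
    (hv.trans (mul_le_mul_of_nonneg_left hvY ht0)) hM hMD

end FormFamily

theorem statement8_general
    {n : ℕ} {H : Type*} [NormedAddCommGroup H] [InnerProductSpace ℂ H]
    [CompleteSpace H] (S : FormFamily n H)
    (K : ℝ) (hK0 : 0 < K)
    (hK : ∀ θ₁ ∈ S.Θ, ∀ θ₂ ∈ S.Θ, ∀ u : H, S.nrm θ₁ u ≤ K * S.nrm θ₂ u)
    (La : ℝ)
    (h0 : (0 : EuclideanSpace ℝ (Fin n)) ∈ S.Θ)
    (ν₀ : ℝ)
    (Ncal : EuclideanSpace ℝ (Fin n) → H → H)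
    (hNcal : ∀ θ ∈ S.Θ, ‖θ‖ ≤ ν₀ / (2 * La) → ∀ v ∈ S.V 0,
      Ncal θ v ∈ S.W 0 ∧ ∀ w ∈ S.W 0, S.a θ (Ncal θ v) w = - S.a θ v w)
    (Vstar : Submodule ℂ H) (hVstarClosed : IsClosed (Vstar : Set H))
    (Vs : EuclideanSpace ℝ (Fin n) → Set H)
    (hVs0 : Vs 0 = (Vstar : Set H))
    (hVsne : ∀ θ ∈ S.Θ, θ ≠ (0 : EuclideanSpace ℝ (Fin n)) → Vs θ = S.V θ)
    (Lstar : ℝ) (hLstar0 : 0 ≤ Lstar)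
    (hH2 : ∀ θ₁ ∈ S.Θ, ∀ θ₂ ∈ S.Θ, ∀ v₁ ∈ Vs θ₁,
      sInf ((fun v₂ => S.nrm θ₂ (v₁ - v₂)) '' Vs θ₂) ≤ Lstar * ‖θ₁ - θ₂‖ * S.nrm θ₁ v₁)
    (Z : Submodule ℂ H)
    (hZsub : (Z : Set H) ⊆ S.V 0) (hVstarsub : (Vstar : Set H) ⊆ S.V 0)
    (KZ : ℝ) (hKZ0 : 0 ≤ KZ) (hKZ1 : KZ < 1)
    (htrans : ∀ v ∈ Vstar, ∀ z ∈ Z, ‖S.ip 0 v z‖ ≤ KZ * S.nrm 0 v * S.nrm 0 z)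
    (γ : ℝ) (hγ : 0 < γ)
    (hH3 : ∀ θ ∈ S.Θ, ∀ w ∈ S.W θ, γ * ‖θ‖ ^ 2 * S.nsq θ w ≤ (S.a θ w w).re)
    (r₀ : ℝ) (hr₀ : r₀ = if Lstar = 0 then ν₀ / (2 * La)
      else min (ν₀ / (2 * La)) ((1 - KZ) / (3 * K * Lstar)))
 :
    ∀ θ ∈ S.Θ, ‖θ‖ < r₀ → ∀ z ∈ Z,
      γ * (1 - KZ) / (3 * K ^ 2) * ‖θ‖ ^ 2 * S.nsq 0 z ≤
        (S.a θ (z + Ncal θ z) (z + Ncal θ z)).re := by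
  intro θ hθ hθr z hz
  rcases eq_or_ne θ 0 with rfl | hθ0
  · simpa using S.a_nonneg 0 h0 (z + Ncal 0 z)
  obtain ⟨hθν, hθL⟩ := le_and_mul_le_of_lt_ite hK0 hLstar0 (by linarith) (hr₀ ▸ hθr)
  obtain ⟨hN, -⟩ := hNcal θ hθ hθν z (hZsub hz)
  obtain ⟨v, hv, hw⟩ := S.exists_mem_V_sub_mem_W hθ (z + Ncal θ z)
  obtain ⟨vs, hvs, hvvs⟩ := S.exists_nrm_sub_le_sInf h0 hVstarClosed v
  have hH2v : S.nrm 0 (v - vs) ≤ Lstar * ‖θ‖ * K * S.nrm 0 v := by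
    have h := hH2 θ hθ 0 h0 v (by rwa [hVsne θ hθ hθ0])
    rw [hVs0, sub_zero] at h
    calc S.nrm 0 (v - vs) ≤ Lstar * ‖θ‖ * S.nrm θ v := hvvs.trans h
      _ ≤ Lstar * ‖θ‖ * K * S.nrm 0 v := by
        rw [mul_assoc _ K]; gcongr; exact hK θ hθ 0 h0 v
  have hw0 := S.div_three_mul_nsq_le_nsq_add_sub h0 hKZ0 hKZ1 hθL (by positivity)
    (S.sub_mem_V h0 (hZsub hz) (hVstarsub hvs)) hN (htrans vs hvs z hz) hH2v
  have hwθ := S.nsq_le_sq_mul_nsq h0 hθ (hK 0 h0 θ hθ (z + Ncal θ z - v))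
  calc γ * (1 - KZ) / (3 * K ^ 2) * ‖θ‖ ^ 2 * S.nsq 0 z
      = γ * ‖θ‖ ^ 2 / K ^ 2 * ((1 - KZ) / 3 * S.nsq 0 z) := by field_simp
    _ ≤ γ * ‖θ‖ ^ 2 / K ^ 2 * (K ^ 2 * S.nsq θ (z + Ncal θ z - v)) :=
      mul_le_mul_of_nonneg_left (hw0.trans hwθ) (by positivity)
    _ = γ * ‖θ‖ ^ 2 * S.nsq θ (z + Ncal θ z - v) := by field_simp
    _ ≤ (S.a θ (z + Ncal θ z - v) (z + Ncal θ z - v)).re := hH3 θ hθ _ hw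
    _ = (S.a θ (z + Ncal θ z) (z + Ncal θ z)).re := by
      rw [← S.a_add_self_of_mem_V hθ hv, add_sub_cancel]

theorem statement8
    {n : ℕ} (hn : 0 < n) {H : Type*} [NormedAddCommGroup H] [InnerProductSpace ℂ H]
    [CompleteSpace H] (S : FormFamily n H)
    (K : ℝ) (hK0 : 0 < K)
    (hK : ∀ θ₁ ∈ S.Θ, ∀ θ₂ ∈ S.Θ, ∀ u : H, S.nrm θ₁ u ≤ K * S.nrm θ₂ u)
    (La : ℝ) (hLa0 : 0 < La)
    (hLa : ∀ θ₁ ∈ S.Θ, ∀ θ₂ ∈ S.Θ, ∀ u w : H,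
      ‖S.a θ₁ u w - S.a θ₂ u w‖ ≤ La * ‖θ₁ - θ₂‖ * S.nrm θ₁ u * S.nrm θ₁ w)
    (hH1 : ∀ θ ∈ S.Θ, ∃ νθ : ℝ, 0 < νθ ∧ ∀ w ∈ S.W θ, νθ * S.nsq θ w ≤ (S.a θ w w).re)
    (h0 : (0 : EuclideanSpace ℝ (Fin n)) ∈ S.Θ)
    (ν₀ : ℝ) (hν₀ : 0 < ν₀)
    (hgap0 : ∀ w ∈ S.W 0, ν₀ * S.nsq 0 w ≤ (S.a 0 w w).re)
    (Ncal : EuclideanSpace ℝ (Fin n) → H → H)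
    (hNcal : ∀ θ ∈ S.Θ, ‖θ‖ ≤ ν₀ / (2 * La) → ∀ v ∈ S.V 0,
      Ncal θ v ∈ S.W 0 ∧ ∀ w ∈ S.W 0, S.a θ (Ncal θ v) w = - S.a θ v w)
    (Vstar : Submodule ℂ H) (hVstarClosed : IsClosed (Vstar : Set H))
    (Vs : EuclideanSpace ℝ (Fin n) → Set H)
    (hVs0 : Vs 0 = (Vstar : Set H))
    (hVsne : ∀ θ ∈ S.Θ, θ ≠ (0 : EuclideanSpace ℝ (Fin n)) → Vs θ = S.V θ)
    (h0acc : (0 : EuclideanSpace ℝ (Fin n)) ∈ closure (S.Θ \ {0}))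
    (Lstar : ℝ) (hLstar0 : 0 ≤ Lstar)
    (hH2 : ∀ θ₁ ∈ S.Θ, ∀ θ₂ ∈ S.Θ, ∀ v₁ ∈ Vs θ₁,
      sInf ((fun v₂ => S.nrm θ₂ (v₁ - v₂)) '' Vs θ₂) ≤ Lstar * ‖θ₁ - θ₂‖ * S.nrm θ₁ v₁)
    (Z : Submodule ℂ H) (hZclosed : IsClosed (Z : Set H))
    (hZsub : (Z : Set H) ⊆ S.V 0) (hVstarsub : (Vstar : Set H) ⊆ S.V 0)
    (KZ : ℝ) (hKZ0 : 0 ≤ KZ) (hKZ1 : KZ < 1)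
    (hspan : ∀ v₀ ∈ S.V 0, ∃ v ∈ Vstar, ∃ z ∈ Z, v₀ = v + z)
    (htrans : ∀ v ∈ Vstar, ∀ z ∈ Z, ‖S.ip 0 v z‖ ≤ KZ * S.nrm 0 v * S.nrm 0 z)
    (γ : ℝ) (hγ : 0 < γ)
    (hH3 : ∀ θ ∈ S.Θ, ∀ w ∈ S.W θ, γ * ‖θ‖ ^ 2 * S.nsq θ w ≤ (S.a θ w w).re)
    (r₀ : ℝ) (hr₀ : r₀ = if Lstar = 0 then ν₀ / (2 * La)
      else min (ν₀ / (2 * La)) ((1 - KZ) / (3 * K * Lstar)))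
 :
    ∀ θ ∈ S.Θ, ‖θ‖ < r₀ → ∀ z ∈ Z,
      γ * (1 - KZ) / (3 * K ^ 2) * ‖θ‖ ^ 2 * S.nsq 0 z ≤
        (S.a θ (z + Ncal θ z) (z + Ncal θ z)).re :=
  statement8_general S K hK0 hK La h0 ν₀ Ncal hNcal Vstar hVstarClosed Vs hVs0 hVsne Lstar hLstar0
    hH2 Z hZsub hVstarsub KZ hKZ0 hKZ1 htrans γ hγ hH3 r₀ hr₀
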